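/- arXiv:1404.7257 — 2 statements merged into one kernel-verified Lean document; each statement's English description precedes it below -/
import Mathlib

section
/- (Structural lemma for the boundary of the bottleneck.) Let Λ = [1,L]^d, let η ∈ A_*, and let z ∈ Λ ∖ {v^*} be such that c_z^{Λ,max}(η) = 1 and η^z ∉ A_*. Then there exist an integer M ≥ 1 and points z = u_0 ≪ u_1 ≪ … ≪ u_M = v^* in Λ such that, setting d_i = ‖u_{i−1} − u_i‖₁, one has 1 = d_1 < d_2 < … < d_M < L and, for every 1 ≤ i ≤ M: (i) Φ_ℓ(η)_{u_i} = Φ_ℓ(η^z)_{u_i} = 0 for all ℓ < d_i; (ii) Φ_{d_i}(η)_{u_i} ≠ Φ_{d_i}(η^z)_{u_i}; (iii) Φ_{d_i−1}(η)_{u_{i−1}} ≠ Φ_{d_i−1}(η^z)_{u_{i−1}}. -/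
/-!
Φ only turns vacancies into particles, and a vacancy of `Φ_s(ζ)` at `x` has gap `> s`; so it
survives stage `s + 1` unless a vacancy of `Φ_s(ζ)` sits at `ℓ¹`-distance exactly `s + 1` below
`x`. Hence, if `Φ(η)` and `Φ(η^z)` first disagree at `x` at stage `s + 1`, both are vacant at `x`
up to stage `s` and they disagree at stage `s` at some `w ≪ x` with `‖x - w‖₁ = s + 1`. Since `A_*`
is read off the spin at `v^*`, the two runs disagree at `v^*` at stage `L - 1`; tracing back from
there, the stages strictly decrease and the only initial discrepancy is at `z`. The first link has
length `1` because `z`, having a vacant neighbour below it, is filled at stage `1` in both runs.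
-/

open scoped BigOperators

namespace East

/-- Sites of the lattice `ℤ^d`. -/
abbrev Site (d : ℕ) := Fin d → ℤ

/-- The canonical basis vector `e_i` of `ℤ^d`. -/
def basis (d : ℕ) (i : Fin d) : Site d := fun j => if j = i then 1 else 0

/-- Spin configurations on a finite box `Λ ⊂ ℤ^d`: `true` = particle, `false` = vacancy. -/
abbrev Cfg (d : ℕ) (Λ : Finset (Site d)) := {x // x ∈ Λ} → Bool

/-- The weight of a configuration under the product Bernoulli(`1-q`) measure `π_Λ`. -/
noncomputable def weight (d : ℕ) (q : ℝ) {Λ : Finset (Site d)} (η : Cfg d Λ) : ℝ :=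
  ∏ x : {x // x ∈ Λ}, (if η x then 1 - q else q)

/-- Expectation with respect to `π_Λ`. -/
noncomputable def mean (d : ℕ) (q : ℝ) {Λ : Finset (Site d)} (f : Cfg d Λ → ℝ) : ℝ :=
  ∑ η : Cfg d Λ, weight d q η * f η

/-- Conditional expectation of `f` with respect to the spins in `V`,
given the spins outside `V`. -/
noncomputable def condEx (d : ℕ) (q : ℝ) (V : Finset (Site d)) {Λ : Finset (Site d)}
    (f : Cfg d Λ → ℝ) (η : Cfg d Λ) : ℝ :=
  ∑ ξ : Cfg d Λ, weight d q ξ * f (fun x => if (x : Site d) ∈ V then ξ x else η x)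

/-- Conditional variance `Var_V(f)` of `f` with respect to the spins in `V`,
given the spins outside `V`. -/
noncomputable def condVar (d : ℕ) (q : ℝ) (V : Finset (Site d)) {Λ : Finset (Site d)}
    (f : Cfg d Λ → ℝ) (η : Cfg d Λ) : ℝ :=
  condEx d q V (fun ζ => f ζ ^ 2) η - (condEx d q V f η) ^ 2

/-- The (total) variance of `f` under `π_Λ`. -/
noncomputable def variance (d : ℕ) (q : ℝ) {Λ : Finset (Site d)} (f : Cfg d Λ → ℝ) : ℝ :=
  mean d q (fun η => f η ^ 2) - (mean d q f) ^ 2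

/-- The configuration on all of `ℤ^d` agreeing with `η` on `Λ` and with the boundary
condition `σ` outside of `Λ`. -/
def full (d : ℕ) {Λ : Finset (Site d)} (σ : Site d → Bool) (η : Cfg d Λ) (y : Site d) : Bool :=
  if h : y ∈ Λ then η ⟨y, h⟩ else σ y

open Classical in
/-- The East-like constraint indicator `c_x^{Λ,σ}(η)`: it equals `1` iff the configuration
agreeing with `η` on `Λ` and with `σ` outside has a vacancy at `x - e_i` for some `i`. -/
noncomputable def cInd (d : ℕ) {Λ : Finset (Site d)} (σ : Site d → Bool) (x : Site d)
    (η : Cfg d Λ) : ℝ :=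
  if ∃ i : Fin d, full d σ η (x - basis d i) = false then 1 else 0

/-- The Dirichlet form `D_Λ^σ(f) = Σ_{x∈Λ} π_Λ(c_x^{Λ,σ} · Var_x f)` of the East-like
process on `Λ` with boundary condition `σ`. -/
noncomputable def dirichlet (d : ℕ) (q : ℝ) (Λ : Finset (Site d)) (σ : Site d → Bool)
    (f : Cfg d Λ → ℝ) : ℝ :=
  ∑ x ∈ Λ, mean d q (fun η => cInd d σ x η * condVar d q {x} f η)

/-- The spectral gap of the East-like process on `Λ` with boundary condition `σ`. -/
noncomputable def gap (d : ℕ) (q : ℝ) (Λ : Finset (Site d)) (σ : Site d → Bool) : ℝ :=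
  sInf { r : ℝ | ∃ f : Cfg d Λ → ℝ, (∃ η η' : Cfg d Λ, f η ≠ f η') ∧
    r = dirichlet d q Λ σ f / variance d q f }

/-- The relaxation time `T_rel^σ(Λ;q)`, the inverse of the spectral gap. -/
noncomputable def Trel (d : ℕ) (q : ℝ) (Λ : Finset (Site d)) (σ : Site d → Bool) : ℝ :=
  (gap d q Λ σ)⁻¹

/-- The cube `[1,L]^d`. -/
noncomputable def cube (d : ℕ) (L : ℕ) : Finset (Site d) := Finset.Icc (fun _ => 1) (fun _ => (L : ℤ))

/-- The maximal boundary condition: all boundary spins are vacancies. -/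
def maxBC (d : ℕ) : Site d → Bool := fun _ => false

/-- The site `(0,1,…,1) = (1,…,1) - e_1`, carrying the vacancy of the (canonical)
minimal boundary condition for the cube `[1,L]^d`. -/
def minVac (d : ℕ) : Site d := fun j => if (j : ℕ) = 0 then 0 else 1

/-- The minimal boundary condition for the cube `[1,L]^d`: a unique vacancy at
`(1,…,1) - e_1`. -/
def minBC (d : ℕ) : Site d → Bool := fun x => decide (x ≠ minVac d)

/-- `T_rel^max(L;q)`, relaxation time on `[1,L]^d` with maximal boundary conditions. -/
noncomputable def TrelMax (d : ℕ) (q : ℝ) (L : ℕ) : ℝ := Trel d q (cube d L) (maxBC d)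

/-- `T_rel^min(L;q)`, relaxation time on `[1,L]^d` with minimal boundary conditions. -/
noncomputable def TrelMin (d : ℕ) (q : ℝ) (L : ℕ) : ℝ := Trel d q (cube d L) (minBC d)

/-- `θ_q = log₂(1/q)`. -/
noncomputable def theta (q : ℝ) : ℝ := Real.logb 2 (1 / q)

/-- The East boundary `∂_E Λ` of a finite set `Λ ⊂ ℤ^d`. -/
def eastBoundary (d : ℕ) (Λ : Finset (Site d)) : Set (Site d) :=
  {x | x ∉ Λ ∧ ∃ i : Fin d, x + basis d i ∈ Λ}

end East

namespace East

/-- The gap `g_x(η)` of a site `x` in the configuration `η ∈ Ω_{[1,L]^d}` extended by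
zeros on `∂_E Λ`: the least `g > 0` such that some `z ∈ Λ ∪ ∂_E Λ` with `z ≪ x`,
`‖x - z‖₁ = g` carries a vacancy. -/
noncomputable def gapOf (d L : ℕ) (η : Cfg d (cube d L)) (x : Site d) : ℕ :=
  sInf { g : ℕ | 0 < g ∧ ∃ z : Site d,
    (z ∈ cube d L ∨ z ∈ eastBoundary d (cube d L)) ∧ z ≤ x ∧
    full d (maxBC d) η z = false ∧ (∑ i, (x i - z i).natAbs) = g }

/-- One stage of the deterministic dynamics: remove all vacancies with gap `g`. -/
noncomputable def phiStep (d L : ℕ) (g : ℕ) (η : Cfg d (cube d L)) : Cfg d (cube d L) :=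
  fun y => if gapOf d L η (y : Site d) = g then true else η y

/-- The deterministic dynamics `Φ_g`. -/
noncomputable def Phi (d L : ℕ) : ℕ → Cfg d (cube d L) → Cfg d (cube d L)
  | 0, η => η
  | g + 1, η => phiStep d L (g + 1) (Phi d L g η)

/-- The upper corner `v^* = (L,…,L)` of `[1,L]^d`. -/
def vstar (d L : ℕ) : Site d := fun _ => (L : ℤ)

/-- The configuration `𝟙0` with a unique vacancy, at `v^*`. -/
def oneZero (d L : ℕ) : Cfg d (cube d L) :=
  fun y => decide ((y : Site d) ≠ vstar d L)

/-- The bottleneck set `A_* = { η : Φ_{L-1}(η) = 𝟙0 }`. -/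
noncomputable def Astar (d L : ℕ) : Set (Cfg d (cube d L)) :=
  { η | Phi d L (L - 1) η = oneZero d L }

/-- The configuration `η` with the spin at `z` flipped. -/
def flipAt (d : ℕ) {Λ : Finset (Site d)} (η : Cfg d Λ) (z : Site d) : Cfg d Λ :=
  fun y => if (y : Site d) = z then !(η y) else η y

end East

namespace East


section Dynamics

variable {d L : ℕ}

lemma mem_cube_iff {x : Site d} : x ∈ cube d L ↔ ∀ j, 1 ≤ x j ∧ x j ≤ (L : ℤ) := by
  simp [cube, Finset.mem_Icc, Pi.le_def, forall_and]

lemma vstar_mem_cube (hL : 1 ≤ L) : vstar d L ∈ cube d L :=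
  mem_cube_iff.mpr fun _ => ⟨show (1 : ℤ) ≤ L by exact_mod_cast hL, le_rfl⟩

lemma full_of_mem {Λ : Finset (Site d)} (σ : Site d → Bool) (ζ : Cfg d Λ) {y : Site d}
    (h : y ∈ Λ) : full d σ ζ y = ζ ⟨y, h⟩ := dif_pos h

lemma full_of_notMem {Λ : Finset (Site d)} (σ : Site d → Bool) (ζ : Cfg d Λ) {y : Site d}
    (h : y ∉ Λ) : full d σ ζ y = σ y := dif_neg h

lemma mem_of_full_ne {Λ : Finset (Site d)} {σ : Site d → Bool} {ζ₁ ζ₂ : Cfg d Λ} {y : Site d}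
    (h : full d σ ζ₁ y ≠ full d σ ζ₂ y) : y ∈ Λ := by
  by_contra hy
  rw [full_of_notMem _ _ hy, full_of_notMem _ _ hy] at h
  exact h rfl

lemma full_flipAt_of_ne {Λ : Finset (Site d)} (σ : Site d → Bool) (η : Cfg d Λ) {z y : Site d}
    (hy : y ≠ z) : full d σ (flipAt d η z) y = full d σ η y := by
  by_cases h : y ∈ Λ
  · simp [full_of_mem _ _ h, flipAt, hy]
  · rw [full_of_notMem _ _ h, full_of_notMem _ _ h]

def l1Dist (x y : Site d) : ℕ := ∑ j, (x j - y j).natAbs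

lemma l1Dist_sub_basis (x : Site d) (i : Fin d) : l1Dist x (x - basis d i) = 1 := by
  rw [l1Dist, Finset.sum_eq_single i (fun j _ hj => by simp [basis, hj]) (by simp)]
  simp [basis]

lemma l1Dist_update_zero (x : Site d) (i : Fin d) :
    l1Dist x (Function.update x i 0) = (x i).natAbs := by
  rw [l1Dist, Finset.sum_eq_single i (fun j _ hj => by simp [hj]) (by simp)]
  simp

lemma sub_basis_ne_self (x : Site d) (i : Fin d) : x - basis d i ≠ x := by
  intro h
  simpa [basis] using congrFun h i

/-- `gapOf d L ζ x` is by definition `sInf (gapSet d L ζ x)`. -/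
def gapSet (d L : ℕ) (ζ : Cfg d (cube d L)) (x : Site d) : Set ℕ :=
  { g : ℕ | 0 < g ∧ ∃ w : Site d,
    (w ∈ cube d L ∨ w ∈ eastBoundary d (cube d L)) ∧ w ≤ x ∧
    full d (maxBC d) ζ w = false ∧ l1Dist x w = g }

lemma one_mem_gapSet {ζ : Cfg d (cube d L)} {x : Site d} (hx : x ∈ cube d L) {i : Fin d}
    (hvac : full d (maxBC d) ζ (x - basis d i) = false) : 1 ∈ gapSet d L ζ x := by
  refine ⟨one_pos, x - basis d i, ?_, fun j => ?_, hvac, l1Dist_sub_basis x i⟩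
  · by_cases h : x - basis d i ∈ cube d L
    · exact Or.inl h
    · exact Or.inr ⟨h, i, by simpa using hx⟩
  · by_cases hj : j = i <;> simp [hj, basis]

/-- Witnessed by `x` with its `i`-th coordinate set to `0`, a site of `∂_E Λ`. -/
lemma natAbs_mem_gapSet (ζ : Cfg d (cube d L)) {x : Site d} (hx : x ∈ cube d L) (i : Fin d) :
    (x i).natAbs ∈ gapSet d L ζ x := by
  have hxi := (mem_cube_iff.mp hx i).1
  have hout : Function.update x i 0 ∉ cube d L := fun h => by
    simpa using (mem_cube_iff.mp h i).1
  refine ⟨by omega, Function.update x i 0, Or.inr ⟨hout, i, ?_⟩, fun j => ?_,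
    full_of_notMem _ _ hout, l1Dist_update_zero x i⟩
  · refine mem_cube_iff.mpr fun j => ?_
    by_cases hj : j = i
    · subst hj; have := mem_cube_iff.mp hx j; simp [basis]; omega
    · simpa [basis, hj] using mem_cube_iff.mp hx j
  · by_cases hj : j = i
    · subst hj; simp; omega
    · simp [hj]

lemma gapOf_mem (hd : 0 < d) (ζ : Cfg d (cube d L)) {x : Site d} (hx : x ∈ cube d L) :
    gapOf d L ζ x ∈ gapSet d L ζ x :=
  Nat.sInf_mem ⟨_, natAbs_mem_gapSet ζ hx ⟨0, hd⟩⟩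

lemma gapOf_le_natAbs (ζ : Cfg d (cube d L)) {x : Site d} (hx : x ∈ cube d L) (i : Fin d) :
    gapOf d L ζ x ≤ (x i).natAbs :=
  Nat.sInf_le (natAbs_mem_gapSet ζ hx i)

lemma full_phiStep_of_eq_true {g : ℕ} {ζ : Cfg d (cube d L)} {y : Site d}
    (h : full d (maxBC d) ζ y = true) : full d (maxBC d) (phiStep d L g ζ) y = true := by
  by_cases hy : y ∈ cube d L
  · rw [full_of_mem _ _ hy] at h ⊢
    simp [phiStep, h]
  · rwa [full_of_notMem _ _ hy] at h ⊢

lemma gapOf_le_gapOf_phiStep (hd : 0 < d) (g : ℕ) (ζ : Cfg d (cube d L)) {x : Site d}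
    (hx : x ∈ cube d L) : gapOf d L ζ x ≤ gapOf d L (phiStep d L g ζ) x := by
  obtain ⟨hpos, w, hw, hwx, hvac, hdist⟩ := gapOf_mem hd (phiStep d L g ζ) hx
  refine Nat.sInf_le ⟨hpos, w, hw, hwx, ?_, hdist⟩
  by_contra h
  simp [full_phiStep_of_eq_true (Bool.eq_true_of_not_eq_false h)] at hvac

noncomputable def spin (ζ : Cfg d (cube d L)) (ℓ : ℕ) (x : Site d) : Bool :=
  full d (maxBC d) (Phi d L ℓ ζ) x

lemma spin_eq_true_of_le {ζ : Cfg d (cube d L)} {x : Site d} {m n : ℕ} (hmn : m ≤ n)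
    (h : spin ζ m x = true) : spin ζ n x = true := by
  induction n, hmn using Nat.le_induction with
  | base => exact h
  | succ n _ ih => exact full_phiStep_of_eq_true ih

lemma spin_eq_false_of_le {ζ : Cfg d (cube d L)} {x : Site d} {m n : ℕ} (hmn : m ≤ n)
    (h : spin ζ n x = false) : spin ζ m x = false := by
  by_contra hm
  simp [spin_eq_true_of_le hmn (Bool.eq_true_of_not_eq_false hm)] at h

lemma spin_eq_false_of_eq_of_ne_succ {ζ₁ ζ₂ : Cfg d (cube d L)} {x : Site d} {s : ℕ}
    (heq : spin ζ₁ s x = spin ζ₂ s x) (hne : spin ζ₁ (s + 1) x ≠ spin ζ₂ (s + 1) x) :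
    spin ζ₁ s x = false := by
  by_contra h
  have ht := Bool.eq_true_of_not_eq_false h
  exact hne (by rw [spin_eq_true_of_le s.le_succ ht, spin_eq_true_of_le s.le_succ (heq ▸ ht)])

lemma lt_gapOf_Phi (hd : 0 < d) (ζ : Cfg d (cube d L)) {x : Site d} (hx : x ∈ cube d L) :
    ∀ m, spin ζ m x = false → m < gapOf d L (Phi d L m ζ) x
  | 0, _ => (gapOf_mem hd ζ hx).1
  | m + 1, h => by
    have hprev := lt_gapOf_Phi hd ζ hx m (spin_eq_false_of_le m.le_succ h)
    have hne : gapOf d L (Phi d L m ζ) x ≠ m + 1 := fun heq => by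
      simp [spin, Phi, phiStep, full_of_mem _ _ hx, heq] at h
    have hmono := gapOf_le_gapOf_phiStep hd (m + 1) (Phi d L m ζ) hx
    exact lt_of_lt_of_le (by omega) hmono

/-- A vacancy of `Φ_s(ζ)` has gap `> s`, so its gap is `s + 1` as soon as `s + 1` is attained. -/
lemma spin_succ_eq_true_iff (hd : 0 < d) {ζ : Cfg d (cube d L)} {x : Site d}
    (hx : x ∈ cube d L) {s : ℕ} (h : spin ζ s x = false) :
    spin ζ (s + 1) x = true ↔ s + 1 ∈ gapSet d L (Phi d L s ζ) x := by
  have hgap := lt_gapOf_Phi hd ζ hx s h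
  rw [spin, full_of_mem _ _ hx] at h ⊢
  simp only [Phi, phiStep, h, ite_eq_left_iff, Bool.false_eq_true, imp_false, not_not]
  exact ⟨fun heq => heq ▸ gapOf_mem hd _ hx, fun hmem => le_antisymm (Nat.sInf_le hmem) hgap⟩

lemma spin_eq_true_of_vacant_below {ζ : Cfg d (cube d L)} {z : Site d} (hz : z ∈ cube d L)
    {i : Fin d} (hvac : full d (maxBC d) ζ (z - basis d i) = false) {ℓ : ℕ} (hℓ : 1 ≤ ℓ) :
    spin ζ ℓ z = true := by
  have hmem := one_mem_gapSet hz hvac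
  have hgap : gapOf d L ζ z = 1 :=
    le_antisymm (Nat.sInf_le hmem) (Nat.sInf_mem ⟨1, hmem⟩).1
  refine spin_eq_true_of_le hℓ ?_
  simp [spin, Phi, phiStep, full_of_mem _ _ hz, hgap]

lemma eq_vstar_of_spin_eq_false (hd : 0 < d) {ζ : Cfg d (cube d L)} {x : Site d}
    (hx : x ∈ cube d L) (h : spin ζ (L - 1) x = false) : x = vstar d L := by
  have hgap := lt_gapOf_Phi hd ζ hx (L - 1) h
  funext j
  have hle := gapOf_le_natAbs (Phi d L (L - 1) ζ) hx j
  have hxj := mem_cube_iff.mp hx j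
  show x j = (L : ℤ)
  omega

lemma mem_Astar_iff (hd : 0 < d) (hL : 1 ≤ L) {ζ : Cfg d (cube d L)} :
    ζ ∈ Astar d L ↔ spin ζ (L - 1) (vstar d L) = false := by
  have hv := vstar_mem_cube (d := d) hL
  refine ⟨fun h => ?_, fun h => ?_⟩
  · have hPhi : Phi d L (L - 1) ζ = oneZero d L := h
    simp [spin, full_of_mem _ _ hv, hPhi, oneZero]
  funext ⟨y, hy⟩
  by_cases hyv : y = vstar d L
  · subst hyv
    simpa [spin, full_of_mem _ _ hy, oneZero] using h
  · have htrue : spin ζ (L - 1) y = true :=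
      Bool.eq_true_of_not_eq_false fun hf => hyv (eq_vstar_of_spin_eq_false hd hy hf)
    simpa [spin, full_of_mem _ _ hy, oneZero, hyv] using htrue

lemma exists_discrepancy_below (hd : 0 < d) {ζ₁ ζ₂ : Cfg d (cube d L)} {x : Site d}
    (hx : x ∈ cube d L) {s : ℕ} (h₁ : spin ζ₁ s x = false) (h₂ : spin ζ₂ s x = false)
    (hne : spin ζ₁ (s + 1) x ≠ spin ζ₂ (s + 1) x) :
    ∃ w, w ≤ x ∧ l1Dist x w = s + 1 ∧ spin ζ₁ s w ≠ spin ζ₂ s w := by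
  have key : ∀ {ζ ζ' : Cfg d (cube d L)}, s + 1 ∈ gapSet d L (Phi d L s ζ) x →
      s + 1 ∉ gapSet d L (Phi d L s ζ') x →
      ∃ w, w ≤ x ∧ l1Dist x w = s + 1 ∧ spin ζ s w ≠ spin ζ' s w := by
    rintro ζ ζ' ⟨hpos, w, hw, hwx, hvac, hdist⟩ hnot
    refine ⟨w, hwx, hdist, fun heq => hnot ⟨hpos, w, hw, hwx, ?_, hdist⟩⟩
    exact (heq ▸ hvac : spin ζ' s w = false)
  rw [Ne, Bool.eq_iff_iff, spin_succ_eq_true_iff hd hx h₁, spin_succ_eq_true_iff hd hx h₂] at hne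
  by_cases hmem : s + 1 ∈ gapSet d L (Phi d L s ζ₁) x
  · exact key hmem fun hmem₂ => hne (iff_of_true hmem hmem₂)
  · obtain ⟨w, hwx, hdist, hw⟩ := key (ζ := ζ₂) (by tauto) hmem
    exact ⟨w, hwx, hdist, hw.symm⟩

end Dynamics

section Chains

variable {d L : ℕ}

/-- Conditions (i)–(iii) for the link `u_{i-1} = a ≪ b = u_i`, where `d_i = ‖b - a‖₁`. -/
def IsLink (ζ₁ ζ₂ : Cfg d (cube d L)) (a b : Site d) : Prop :=
  (∀ l < l1Dist b a, spin ζ₁ l b = false ∧ spin ζ₂ l b = false) ∧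
    spin ζ₁ (l1Dist b a) b ≠ spin ζ₂ (l1Dist b a) b ∧
    spin ζ₁ (l1Dist b a - 1) a ≠ spin ζ₂ (l1Dist b a - 1) a

structure IsChain (ζ₁ ζ₂ : Cfg d (cube d L)) (M : ℕ) (u : ℕ → Site d) : Prop where
  one_le : 1 ≤ M
  mem : ∀ i ≤ M, u i ∈ cube d L
  le_succ : ∀ i < M, u i ≤ u (i + 1)
  l1Dist_one : l1Dist (u 1) (u 0) = 1
  l1Dist_lt : ∀ i, 1 ≤ i → i < M → l1Dist (u i) (u (i - 1)) < l1Dist (u (i + 1)) (u i)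
  isLink : ∀ i, 1 ≤ i → i ≤ M → IsLink ζ₁ ζ₂ (u (i - 1)) (u i)

variable {ζ₁ ζ₂ : Cfg d (cube d L)}

lemma IsChain.single {a b : Site d} (ha : a ∈ cube d L) (hb : b ∈ cube d L) (hab : a ≤ b)
    (hdist : l1Dist b a = 1) (hlink : IsLink ζ₁ ζ₂ a b) :
    IsChain ζ₁ ζ₂ 1 fun n => if n = 0 then a else b where
  one_le := le_rfl
  mem i _ := by split_ifs <;> assumption
  le_succ i hi := by simpa [Nat.lt_one_iff.mp hi] using hab
  l1Dist_one := by simpa using hdist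
  l1Dist_lt i h₁ h₂ := by omega
  isLink i h₁ h₂ := by
    obtain rfl : i = 1 := by omega
    simpa using hlink

lemma IsChain.snoc {M : ℕ} {u : ℕ → Site d} (hu : IsChain ζ₁ ζ₂ M u) {x : Site d}
    (hx : x ∈ cube d L) (hle : u M ≤ x) (hlt : l1Dist (u M) (u (M - 1)) < l1Dist x (u M))
    (hlink : IsLink ζ₁ ζ₂ (u M) x) :
    IsChain ζ₁ ζ₂ (M + 1) fun n => if n ≤ M then u n else x where
  one_le := by omega
  mem i _ := by split_ifs with h; exacts [hu.mem i h, hx]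
  le_succ i hi := by
    rcases (Nat.lt_succ_iff.mp hi).lt_or_eq with hi | rfl
    · simpa [hi.le, Nat.succ_le_of_lt hi] using hu.le_succ i hi
    · simpa using hle
  l1Dist_one := by simpa [hu.one_le] using hu.l1Dist_one
  l1Dist_lt i h₁ h₂ := by
    rcases (Nat.lt_succ_iff.mp h₂).lt_or_eq with hi | rfl
    · simpa [hi.le, Nat.succ_le_of_lt hi, show i - 1 ≤ M by omega] using hu.l1Dist_lt i h₁ hi
    · simpa [show i - 1 ≤ i by omega] using hlt
  isLink i h₁ h₂ := by
    rcases h₂.lt_or_eq with hi | rfl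
    · have hi : i ≤ M := by omega
      simpa [hi, show i - 1 ≤ M by omega] using hu.isLink i h₁ hi
    · simpa using hlink

theorem exists_isChain {z : Site d} (hz : z ∈ cube d L)
    (hagree : ∀ y ≠ z, full d (maxBC d) ζ₁ y = full d (maxBC d) ζ₂ y)
    {i : Fin d} (hvac : full d (maxBC d) ζ₁ (z - basis d i) = false) (t : ℕ) {x : Site d}
    (hxz : x ≠ z) (hdiff : spin ζ₁ t x ≠ spin ζ₂ t x) :
    ∃ M u, IsChain ζ₁ ζ₂ M u ∧ u 0 = z ∧ u M = x ∧ l1Dist (u M) (u (M - 1)) ≤ t := by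
  induction t generalizing x with
  | zero => exact absurd (hagree x hxz) hdiff
  | succ s ih =>
    by_cases hprev : spin ζ₁ s x ≠ spin ζ₂ s x
    · obtain ⟨M, u, hu, hu0, huM, hlast⟩ := ih hxz hprev
      exact ⟨M, u, hu, hu0, huM, by omega⟩
    rw [not_not] at hprev
    have hx : x ∈ cube d L := mem_of_full_ne hdiff
    have h₁ : spin ζ₁ s x = false := spin_eq_false_of_eq_of_ne_succ hprev hdiff
    have h₂ : spin ζ₂ s x = false := hprev ▸ h₁
    obtain ⟨w, hwx, hdist, hw⟩ := exists_discrepancy_below i.pos hx h₁ h₂ hdiff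
    have hlink : IsLink ζ₁ ζ₂ w x := by
      refine ⟨fun l hl => ?_, hdist ▸ hdiff, hdist ▸ hw⟩
      exact ⟨spin_eq_false_of_le (by omega) h₁, spin_eq_false_of_le (by omega) h₂⟩
    rcases s.eq_zero_or_pos with rfl | hs
    · obtain rfl : w = z := by
        by_contra hwz; exact hw (hagree w hwz)
      exact ⟨1, _, IsChain.single hz hx hwx hdist hlink, rfl, rfl, by simp [hdist]⟩
    · -- `z` has a vacant neighbour below it in both runs, so it is filled from stage 1 on.
      have hwz : w ≠ z := by
        rintro rfl
        have hvac₂ := (hagree _ (sub_basis_ne_self w i)).symm.trans hvac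
        exact hw (by rw [spin_eq_true_of_vacant_below hz hvac hs,
          spin_eq_true_of_vacant_below hz hvac₂ hs])
      obtain ⟨M, u, hu, hu0, huM, hlast⟩ := ih hwz hw
      subst huM
      exact ⟨M + 1, _, hu.snoc hx hwx (by omega) hlink, by simp [hu0], by simp,
        by simp [hdist]⟩

end Chains

/-- **structural lemma for the boundary of the bottleneck.** If
`η ∈ A_*`, `z ∈ Λ ∖ {v^*}`, `c_z^{Λ,max}(η) = 1` and `η^z ∉ A_*`, then there is a chain
`z = u_0 ≪ u_1 ≪ … ≪ u_M = v^*` in `Λ`, `M ≥ 1`, whose consecutive `ℓ¹`-distances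
`d_i = ‖u_{i-1} - u_i‖₁` satisfy `1 = d_1 < d_2 < … < d_M < L` and, for `1 ≤ i ≤ M`:
(i) `Φ_ℓ(η)_{u_i} = Φ_ℓ(η^z)_{u_i} = 0` for `ℓ < d_i`;
(ii) `Φ_{d_i}(η)_{u_i} ≠ Φ_{d_i}(η^z)_{u_i}`;
(iii) `Φ_{d_i-1}(η)_{u_{i-1}} ≠ Φ_{d_i-1}(η^z)_{u_{i-1}}`. -/
theorem east_bottleneck_structure (d L : ℕ) (hd : 1 ≤ d) (hL : 1 ≤ L)
    (η : Cfg d (cube d L)) (hη : η ∈ Astar d L)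
    (z : Site d) (hz : z ∈ cube d L) (hzv : z ≠ vstar d L)
    (hc : cInd d (maxBC d) z η = 1)
    (hflip : flipAt d η z ∉ Astar d L) :
    ∃ (M : ℕ) (u : ℕ → Site d), 1 ≤ M ∧ u 0 = z ∧ u M = vstar d L ∧
      (∀ i ≤ M, u i ∈ cube d L) ∧
      (∀ i < M, u i ≤ u (i + 1)) ∧
      (∑ j, (u 1 j - u 0 j).natAbs) = 1 ∧
      (∀ i, 1 ≤ i → i < M →
        (∑ j, (u i j - u (i - 1) j).natAbs) < ∑ j, (u (i + 1) j - u i j).natAbs) ∧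
      (∑ j, (u M j - u (M - 1) j).natAbs) < L ∧
      (∀ i, 1 ≤ i → i ≤ M →
        (∀ l < ∑ j, (u i j - u (i - 1) j).natAbs,
          full d (maxBC d) (Phi d L l η) (u i) = false ∧
          full d (maxBC d) (Phi d L l (flipAt d η z)) (u i) = false) ∧
        full d (maxBC d) (Phi d L (∑ j, (u i j - u (i - 1) j).natAbs) η) (u i) ≠
          full d (maxBC d)
            (Phi d L (∑ j, (u i j - u (i - 1) j).natAbs) (flipAt d η z)) (u i) ∧
        full d (maxBC d)
            (Phi d L ((∑ j, (u i j - u (i - 1) j).natAbs) - 1) η) (u (i - 1)) ≠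
          full d (maxBC d)
            (Phi d L ((∑ j, (u i j - u (i - 1) j).natAbs) - 1) (flipAt d η z))
            (u (i - 1))) := by
  obtain ⟨i, hvac⟩ : ∃ i : Fin d, full d (maxBC d) η (z - basis d i) = false := by
    by_contra h
    simp [cInd, h] at hc
  have hη_v := (mem_Astar_iff hd hL).mp hη
  have hflip_v : spin (flipAt d η z) (L - 1) (vstar d L) = true :=
    Bool.eq_true_of_not_eq_false fun h => hflip ((mem_Astar_iff hd hL).mpr h)
  obtain ⟨M, u, hu, hu0, huM, hlast⟩ :=
    exists_isChain hz (fun y hy => (full_flipAt_of_ne _ η hy).symm) hvac (L - 1) hzv.symm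
      (by rw [hη_v, hflip_v]; decide)
  refine ⟨M, u, hu.one_le, hu0, huM, hu.mem, hu.le_succ, hu.l1Dist_one, hu.l1Dist_lt, ?_,
    hu.isLink⟩
  show l1Dist (u M) (u (M - 1)) < L
  omega

end East
end

section
/- (Entropy bound for the bottleneck counting.) For all integers d ≥ 1 and n ≥ 1, with the convention 0⁰ = 1: Σ_{(x_1,…,x_{n+1}) ∈ U(n+1)} (x_1·x_2·⋯·x_{n+1})^{d−1} ≤ 2^{ d( n(n+1)/2 + n ) } / ( n! · dⁿ ). -/
/-!
Removing the first entry `x ≤ S` of a tuple whose entries are bounded by `S` plus the sum of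
the preceding ones leaves a tuple with slack `S + x`. Hence the weighted count of such `k`-tuples
is at most `B_k(S) = 2^(d·k(k+1)/2) (S+1)^(dk) / (k! dᵏ)` as soon as
`∑_{x ≤ S} x^(d-1) B_k(S+x) ≤ B_{k+1}(S)`, which follows from `x ≤ S+1+x` and the comparison of
`∑_{x ≤ S} (S+1+x)^(d(k+1)-1)` with `∫ t^(d(k+1)-1)` over `[S+1, 2(S+1)]`. In `U(n+1)` the first
entry is `1` and the other `n` entries form a tuple with slack `1`.
-/

open Finset Nat

theorem sum_range_add_pow_le {x₀ : ℝ} (hx₀ : 0 ≤ x₀) (N e : ℕ) :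
    ∑ i ∈ range N, (x₀ + i) ^ e ≤ (x₀ + N) ^ (e + 1) / (e + 1) := by
  have hmono : MonotoneOn (fun x : ℝ => x ^ e) (Set.Icc x₀ (x₀ + N)) :=
    fun a ha _ _ hab => pow_le_pow_left₀ (hx₀.trans ha.1) hab e
  calc ∑ i ∈ range N, (x₀ + i) ^ e ≤ ∫ x in x₀..x₀ + N, x ^ e := hmono.sum_le_integral
    _ = ((x₀ + N) ^ (e + 1) - x₀ ^ (e + 1)) / (e + 1) := integral_pow e
    _ ≤ (x₀ + N) ^ (e + 1) / (e + 1) := by gcongr; exact sub_le_self _ (by positivity)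

def PrefixBounded {k : ℕ} (S : ℕ) (y : Fin k → ℕ) : Prop :=
  ∀ i, y i ≤ S + ∑ j with j < i, y j

lemma PrefixBounded.head_le {k S : ℕ} {y : Fin (k + 1) → ℕ} (hy : PrefixBounded S y) :
    y 0 ≤ S := by
  simpa using hy 0

lemma Fin.sum_filter_lt_succ {k : ℕ} (y : Fin (k + 1) → ℕ) (i : Fin k) :
    ∑ j with j < i.succ, y j = y 0 + ∑ j with j < i, Fin.tail y j := by
  rw [sum_filter, sum_filter, Fin.sum_univ_succ]
  simp [Fin.succ_lt_succ_iff, Fin.succ_pos, Fin.tail]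

lemma prefixBounded_tail {k S : ℕ} {y : Fin (k + 1) → ℕ}
    (hy : ∀ i : Fin k, y i.succ ≤ S + ∑ j with j < i.succ, y j) :
    PrefixBounded (S + y 0) (Fin.tail y) := fun i => by
  show y i.succ ≤ _
  simpa only [Fin.sum_filter_lt_succ, ← add_assoc] using hy i

lemma sum_prod_pow_eq_of_head_eq {k e x : ℕ} {W : Finset (Fin (k + 1) → ℕ)}
    (hW : ∀ y ∈ W, y 0 = x) :
    ∑ y ∈ W, ∏ i, (y i : ℝ) ^ e = (x : ℝ) ^ e * ∑ z ∈ W.image Fin.tail, ∏ i, (z i : ℝ) ^ e := by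
  have hinj : Set.InjOn Fin.tail (W : Set (Fin (k + 1) → ℕ)) := fun y hy y' hy' h => by
    rw [← Fin.cons_self_tail y, ← Fin.cons_self_tail y', hW y hy, hW y' hy', h]
  rw [sum_image hinj, mul_sum]
  refine sum_congr rfl fun y hy => ?_
  rw [Fin.prod_univ_succ, hW y hy]
  rfl

noncomputable def bottleneckBound (d k S : ℕ) : ℝ :=
  2 ^ (d * (k * (k + 1) / 2)) * ((S : ℝ) + 1) ^ (d * k) / (k ! * (d : ℝ) ^ k)

lemma sum_pow_mul_bottleneckBound_le {d : ℕ} (hd : 0 < d) (k S : ℕ) :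
    ∑ x ∈ range (S + 1), (x : ℝ) ^ (d - 1) * bottleneckBound d k (S + x) ≤
      bottleneckBound d (k + 1) S := by
  set c : ℝ := 2 ^ (d * (k * (k + 1) / 2)) / (k ! * (d : ℝ) ^ k)
  set e := d * (k + 1) - 1
  have he : e + 1 = d * (k + 1) := Nat.sub_add_cancel (Nat.mul_pos hd k.succ_pos)
  have hterm : ∀ x ∈ range (S + 1),
      (x : ℝ) ^ (d - 1) * bottleneckBound d k (S + x) ≤ c * ((S + 1 : ℝ) + x) ^ e := by
    intro x _
    have hsplit : d - 1 + d * k = e := by rw [mul_add_one] at he; omega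
    calc (x : ℝ) ^ (d - 1) * bottleneckBound d k (S + x)
        = c * ((x : ℝ) ^ (d - 1) * ((S + 1 : ℝ) + x) ^ (d * k)) := by
          simp only [bottleneckBound, c]; push_cast; ring
      _ ≤ c * (((S + 1 : ℝ) + x) ^ (d - 1) * ((S + 1 : ℝ) + x) ^ (d * k)) := by
          gcongr; linarith
      _ = c * ((S + 1 : ℝ) + x) ^ e := by rw [← pow_add, hsplit]
  have hT : (k + 1) * (k + 1 + 1) / 2 = k * (k + 1) / 2 + (k + 1) := by
    have : (k + 1) * (k + 1 + 1) = k * (k + 1) + 2 * (k + 1) := by ring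
    omega
  calc _ ≤ ∑ x ∈ range (S + 1), c * ((S + 1 : ℝ) + x) ^ e := sum_le_sum hterm
    _ ≤ c * (((S + 1 : ℝ) + (S + 1 : ℕ)) ^ (e + 1) / (e + 1)) := by
        rw [← mul_sum]; gcongr; exact sum_range_add_pow_le (by positivity) _ _
    _ = bottleneckBound d (k + 1) S := by
        have htwice : (S + 1 : ℝ) + (S + 1 : ℕ) = 2 * (S + 1) := by push_cast; ring
        rw [he, show ((e : ℝ) + 1) = d * (k + 1) by exact_mod_cast he, htwice, mul_pow,
          bottleneckBound, hT, Nat.mul_add d, pow_add, factorial_succ, pow_succ]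
        simp only [c]
        push_cast
        field_simp
        ring

theorem sum_prod_pow_le_bottleneckBound {d : ℕ} (hd : 0 < d) :
    ∀ (k S : ℕ) (W : Finset (Fin k → ℕ)), (∀ y ∈ W, PrefixBounded S y) →
      ∑ y ∈ W, ∏ i, (y i : ℝ) ^ (d - 1) ≤ bottleneckBound d k S
  | 0, S, W, _ => by
    calc _ = (#W : ℝ) := by simp
      _ ≤ 1 := by exact_mod_cast card_le_one.mpr fun a _ b _ => Subsingleton.elim a b
      _ = bottleneckBound d 0 S := by simp [bottleneckBound]
  | k + 1, S, W, hW => by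
    have hhead : ∀ y ∈ W, y 0 ∈ range (S + 1) := fun y hy =>
      mem_range_succ_iff.mpr (hW y hy).head_le
    rw [← sum_fiberwise_of_maps_to hhead]
    refine (sum_le_sum fun x _ => ?_).trans (sum_pow_mul_bottleneckBound_le hd k S)
    rw [sum_prod_pow_eq_of_head_eq fun y hy => (mem_filter.mp hy).2]
    gcongr
    refine sum_prod_pow_le_bottleneckBound hd k (S + x) _ fun z hz => ?_
    obtain ⟨y, hy, rfl⟩ := mem_image.mp hz
    obtain ⟨hyW, rfl⟩ := mem_filter.mp hy
    exact prefixBounded_tail fun i => hW y hyW i.succ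

theorem east_bottleneck_entropy_bound_general (d n : ℕ) (hd : 1 ≤ d)
    (U : Finset (Fin (n + 1) → ℕ))
    (hU : ∀ x ∈ U, x 0 = 1 ∧ ∀ i : Fin (n + 1), i ≠ 0 →
      x i ≤ ∑ j ∈ Finset.univ.filter (fun j => j < i), x j) :
    (∑ x ∈ U, ∏ i, ((x i : ℝ)) ^ (d - 1)) ≤
      2 ^ (d * (n * (n + 1) / 2 + n)) / ((n.factorial : ℝ) * (d : ℝ) ^ n) := by
  have htail : ∀ z ∈ U.image Fin.tail, PrefixBounded 1 z := by
    intro z hz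
    obtain ⟨x, hx, rfl⟩ := mem_image.mp hz
    have := prefixBounded_tail (S := 0) fun i => by
      simpa using (hU x hx).2 i.succ i.succ_ne_zero
    rwa [zero_add, (hU x hx).1] at this
  calc _ = ((1 : ℕ) : ℝ) ^ (d - 1) * ∑ z ∈ U.image Fin.tail, ∏ i, (z i : ℝ) ^ (d - 1) :=
        sum_prod_pow_eq_of_head_eq fun x hx => (hU x hx).1
    _ ≤ bottleneckBound d n 1 := by
        rw [Nat.cast_one, one_pow, one_mul]
        exact sum_prod_pow_le_bottleneckBound hd n 1 _ htail
    _ = _ := by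
        rw [bottleneckBound, Nat.mul_add d, pow_add]
        norm_num

/-- **entropy bound for the bottleneck counting.** For `d ≥ 1`, `n ≥ 1`
and any finite set `U` of `(n+1)`-tuples of non-negative integers `(x_0,…,x_n)` with
`x_0 = 1` and `x_i ≤ x_0 + … + x_{i-1}` for every `i ≥ 1` (in particular for
`U = U(n+1)` itself), one has, with the convention `0⁰ = 1`:
`Σ_{x ∈ U} (x_0 ⋯ x_n)^{d-1} ≤ 2^{d(n(n+1)/2 + n)} / (n! · dⁿ)`. -/
theorem east_bottleneck_entropy_bound (d n : ℕ) (hd : 1 ≤ d) (hn : 1 ≤ n)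
    (U : Finset (Fin (n + 1) → ℕ))
    (hU : ∀ x ∈ U, x 0 = 1 ∧ ∀ i : Fin (n + 1), i ≠ 0 →
      x i ≤ ∑ j ∈ Finset.univ.filter (fun j => j < i), x j) :
    (∑ x ∈ U, ∏ i, ((x i : ℝ)) ^ (d - 1)) ≤
      2 ^ (d * (n * (n + 1) / 2 + n)) / ((n.factorial : ℝ) * (d : ℝ) ^ n) :=
  east_bottleneck_entropy_bound_general d n hd U hU
end
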